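/- arXiv:hep-th/0305189 — 2 statements merged into one kernel-verified Lean document; each statement's English description precedes it below -/
import Mathlib

section
/- Let M be an N-periodic infinite symmetric tridiagonal matrix with nonzero off-diagonal entries y_i. If X is an N-periodic infinite matrix of maximal degree k (i.e., X^{(r)} = 0 for r > k) commuting with M, then there exist complex constants λ_i for i ≤ k such that X = Σ_{i ≤ k} λ_i M^i, where negative powers M^i are interpreted via the inverse of M in the ring of matrices of finite maximal degree. -/
namespace Toda

/-- Infinite ℤ×ℤ matrices over ℂ. -/
abbrev Mat : Type := ℤ → ℤ → ℂ

/-- Matrix multiplication (entrywise `tsum`; for band-type matrices these sums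
are finitely supported). -/
noncomputable def mul (X Y : Mat) : Mat := fun i j => ∑' k : ℤ, X i k * Y k j

/-- Commutator. -/
noncomputable def comm (X Y : Mat) : Mat := mul X Y - mul Y X

/-- Strictly upper triangular part. -/
def upper (X : Mat) : Mat := fun i j => if i < j then X i j else 0

/-- Strictly lower triangular part. -/
def lower (X : Mat) : Mat := fun i j => if j < i then X i j else 0

/-- Diagonal part. -/
def diagPart (X : Mat) : Mat := fun i j => if i = j then X i j else 0

/-- Identity matrix. -/
def one : Mat := fun i j => if i = j then 1 else 0

/-- Matrix powers. -/
noncomputable def pow (X : Mat) : ℕ → Mat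
  | 0 => one
  | m + 1 => mul X (pow X m)

/-- Evaluate a polynomial on a matrix. -/
noncomputable def evalPoly (A : Polynomial ℂ) (X : Mat) : Mat :=
  ∑ m ∈ Finset.range (A.natDegree + 1), A.coeff m • pow X m

/-- `N`-periodicity of entries. -/
def Periodic (N : ℕ) (X : Mat) : Prop := ∀ i j, X (i + N) (j + N) = X i j

/-- `X` has (pure) degree `k`: nonzero entries only on diagonal `j = i + k`. -/
def HasDegree (k : ℤ) (X : Mat) : Prop := ∀ i j, X i j ≠ 0 → j = i + k

/-- `X` has maximal degree `k`: entries vanish above diagonal `k`. -/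
def MaxDeg (k : ℤ) (X : Mat) : Prop := ∀ i j, X i j ≠ 0 → j - i ≤ k

/-- The infinite symmetric tridiagonal Toda Lax matrix with diagonal `φ` and
off-diagonal entries `y`. -/
def todaM (φ y : ℤ → ℂ) : Mat := fun i j =>
  if j = i then φ i
  else if j = i + 1 then y i
  else if i = j + 1 then y j
  else 0

/-- Degree-`r` component of a matrix. -/
def topPart (r : ℤ) (X : Mat) : Mat := fun i j => if j = i + r then X i j else 0

/-- Inverse of the degree-`r` component (a matrix of degree `-r`). -/
noncomputable def topInv (r : ℤ) (X : Mat) : Mat :=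
  fun i j => if j = i - r then (X j (j + r))⁻¹ else 0

/-- Entrywise geometric series `Σ_{k≥0} (-1)^k Q^k`, which is a finite sum in
each entry when `Q` has maximal degree `≤ -1`. -/
noncomputable def geomSeries (Q : Mat) : Mat :=
  fun i j => ∑ m ∈ Finset.range ((i - j).toNat + 1), (-1 : ℂ) ^ m * pow Q m i j

/-- The inverse `R⁻¹ = (R^{(r)})⁻¹ Σ_{k≥0} (-1)^k (R̃ (R^{(r)})⁻¹)^k` of a matrix
of maximal degree `r` with invertible top component. -/
noncomputable def geomInv (r : ℤ) (R : Mat) : Mat :=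
  mul (topInv r R) (geomSeries (mul (R - topPart r R) (topInv r R)))

/-- Integer powers of a matrix, negative powers via the geometric-series inverse. -/
noncomputable def intPow (X : Mat) (m : ℤ) : Mat :=
  if 0 ≤ m then pow X m.toNat else pow (geomInv 1 X) (-m).toNat

/-- Shift operator `Z = D^N`. -/
def shiftZ (N : ℕ) : Mat := fun i j => if j = i + N then 1 else 0

/-- Inverse shift `Z⁻¹`. -/
def shiftZinv (N : ℕ) : Mat := fun i j => if j = i - N then 1 else 0

/-- The finite `N×N` periodic Toda Lax matrix with spectral parameter `z`,
diagonal `p`, off-diagonal entries `y 1, …, y (N-1)` and corner entries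
`y 0 * z`, `y 0 * z⁻¹`. -/
noncomputable def laxFin (N : ℕ) (p y : ℕ → ℂ) (z : ℂ) :
    Matrix (Fin N) (Fin N) ℂ := fun i j =>
  if (i : ℕ) = j then p i
  else if (j : ℕ) = i + 1 then y (i + 1)
  else if (i : ℕ) = j + 1 then y (j + 1)
  else if (i : ℕ) = 0 ∧ (j : ℕ) = N - 1 then y 0 * z
  else if (i : ℕ) = N - 1 ∧ (j : ℕ) = 0 then y 0 * z⁻¹
  else 0

/-- Embedding of polynomials in `x` into the field `ℂ((x⁻¹))` of Laurent series
at infinity, sending `x` to the inverse of the local parameter. -/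
noncomputable def atInf (p : Polynomial ℂ) : LaurentSeries ℂ :=
  Polynomial.eval₂ HahnSeries.C (HahnSeries.single (-1 : ℤ) 1) p

/-!
The top diagonal `x_i = X i (i + d)` of a matrix of maximal degree `d` commuting with `M` obeys
`x_i y_{i+d} = y_i x_{i+1}` (the `(i, i + d + 1)` entry of `[X, M]`), so with all `y_i ≠ 0` it
is determined by `x_0`. The powers `M^d`, `d ∈ ℤ`, lie in the commutant, have maximal degree `d`
and nonvanishing top diagonal, so subtracting a suitable multiple of `M^d` lowers the degree of
`X` while keeping it in the commutant. Starting at `d = k` and descending, every entry `X i j`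
is settled after finitely many steps, since `M^d` vanishes at `(i, j)` once `d < j - i`.
Negative powers exist because the geometric series gives a two-sided inverse in the ring of
matrices of finite maximal degree, where every product is a finite sum.
-/

section MaxDeg

variable {a b c : ℤ} {X Y Z : Mat}

lemma MaxDeg.mono (hX : MaxDeg a X) (hab : a ≤ b) : MaxDeg b X :=
  fun i j hij => (hX i j hij).trans hab

lemma MaxDeg.apply_eq_zero (hX : MaxDeg a X) {i j : ℤ} (hij : a < j - i) : X i j = 0 := by
  by_contra h
  exact absurd (hX i j h) (not_le.mpr hij)

lemma HasDegree.maxDeg (hX : HasDegree a X) : MaxDeg a X :=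
  fun i j hij => by have := hX i j hij; omega

lemma maxDeg_one : MaxDeg 0 one := by
  intro i j h
  by_cases hij : i = j
  · omega
  · simp [one, hij] at h

lemma MaxDeg.add (hX : MaxDeg a X) (hY : MaxDeg a Y) : MaxDeg a (X + Y) := by
  intro i j h
  by_contra hlt
  exact h (by simp [hX.apply_eq_zero (not_le.mp hlt), hY.apply_eq_zero (not_le.mp hlt)])

lemma mul_apply_eq_sum (hX : MaxDeg a X) (hY : MaxDeg b Y) (i j : ℤ) :
    mul X Y i j = ∑ m ∈ Finset.Icc (j - b) (i + a), X i m * Y m j := by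
  refine tsum_eq_sum fun m hm => ?_
  rcases not_and_or.mp (Finset.mem_Icc.not.mp hm) with h | h
  · rw [hY.apply_eq_zero (by omega), mul_zero]
  · rw [hX.apply_eq_zero (by omega), zero_mul]

lemma mul_apply_of_hasDegree (hX : HasDegree a X) (Y : Mat) (i j : ℤ) :
    mul X Y i j = X i (i + a) * Y (i + a) j := by
  refine tsum_eq_single (i + a) fun m hm => ?_
  by_cases h : X i m = 0
  · rw [h, zero_mul]
  · exact absurd (hX i m h) hm

lemma MaxDeg.mul (hX : MaxDeg a X) (hY : MaxDeg b Y) : MaxDeg (a + b) (mul X Y) := by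
  intro i j h
  by_contra hlt
  refine h ((mul_apply_eq_sum hX hY i j).trans (Finset.sum_eq_zero fun m hm => ?_))
  rw [Finset.mem_Icc] at hm
  omega

lemma mul_apply_top (hX : MaxDeg a X) (hY : MaxDeg b Y) (i : ℤ) :
    mul X Y i (i + a + b) = X i (i + a) * Y (i + a) (i + a + b) := by
  rw [mul_apply_eq_sum hX hY, add_sub_cancel_right, Finset.Icc_self, Finset.sum_singleton]

lemma mul_assoc_of_maxDeg (hX : MaxDeg a X) (hY : MaxDeg b Y) (hZ : MaxDeg c Z) :
    mul (mul X Y) Z = mul X (mul Y Z) := by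
  funext i j
  rw [mul_apply_eq_sum (hX.mul hY) hZ, mul_apply_eq_sum hX (hY.mul hZ)]
  simp_rw [mul_apply_eq_sum hX hY, mul_apply_eq_sum hY hZ, Finset.sum_mul, Finset.mul_sum,
    mul_assoc]
  exact Finset.sum_comm' fun m l => by simp only [Finset.mem_Icc]; omega

lemma mul_one_eq_self (X : Mat) : mul X one = X := by
  funext i j
  exact (tsum_eq_single j fun k hk => by simp [one, hk]).trans (by simp [one])

lemma one_mul_eq_self (X : Mat) : mul one X = X := by
  funext i j
  exact (tsum_eq_single i fun k hk => by simp [one, Ne.symm hk]).trans (by simp [one])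

lemma add_mul_of_maxDeg (hX : MaxDeg a X) (hY : MaxDeg a Y) (hZ : MaxDeg b Z) :
    mul (X + Y) Z = mul X Z + mul Y Z := by
  funext i j
  simp only [Pi.add_apply, mul_apply_eq_sum (hX.add hY) hZ, mul_apply_eq_sum hX hZ,
    mul_apply_eq_sum hY hZ, add_mul, Finset.sum_add_distrib]

lemma mul_add_of_maxDeg (hX : MaxDeg a X) (hY : MaxDeg b Y) (hZ : MaxDeg b Z) :
    mul X (Y + Z) = mul X Y + mul X Z := by
  funext i j
  simp only [Pi.add_apply, mul_apply_eq_sum hX (hY.add hZ), mul_apply_eq_sum hX hY,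
    mul_apply_eq_sum hX hZ, mul_add, Finset.sum_add_distrib]

end MaxDeg

section Pow

variable {a b : ℤ} {A B X : Mat}

lemma MaxDeg.pow (hX : MaxDeg a X) (n : ℕ) : MaxDeg (n * a) (pow X n) := by
  induction n with
  | zero => rw [Nat.cast_zero, zero_mul]; exact maxDeg_one
  | succ n ih => exact (hX.mul ih).mono (by push_cast; linarith)

lemma pow_mul_comm (hA : MaxDeg a A) (hB : MaxDeg b B) (hAB : mul A B = mul B A) (n : ℕ) :
    mul (pow A n) B = mul B (pow A n) := by
  induction n with
  | zero => exact (one_mul_eq_self B).trans (mul_one_eq_self B).symm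
  | succ n ih =>
    have hAn := hA.pow n
    calc mul (mul A (pow A n)) B = mul A (mul B (pow A n)) := by
          rw [mul_assoc_of_maxDeg hA hAn hB, ih]
      _ = mul B (mul A (pow A n)) := by
          rw [← mul_assoc_of_maxDeg hA hB hAn, hAB, mul_assoc_of_maxDeg hB hA hAn]

lemma pow_succ_eq_mul_pow (hX : MaxDeg a X) (n : ℕ) : pow X (n + 1) = mul (pow X n) X :=
  (pow_mul_comm hX hX rfl n).symm

lemma pow_apply_top_ne_zero (hX : MaxDeg a X) (htop : ∀ i, X i (i + a) ≠ 0) (n : ℕ)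
    (i : ℤ) : pow X n i (i + n * a) ≠ 0 := by
  induction n generalizing i with
  | zero => simp [pow, one]
  | succ n ih =>
    rw [show i + ((n + 1 : ℕ) : ℤ) * a = i + a + n * a by push_cast; ring,
      show pow X (n + 1) = mul X (pow X n) from rfl, mul_apply_top hX (hX.pow n)]
    exact mul_ne_zero (htop i) (ih (i + a))

end Pow

section GeomSeries

variable {Q : Mat}

lemma geomSeries_apply_eq_sum (hQ : MaxDeg (-1) Q) {i j : ℤ} {n : ℕ} (hn : i - j < n) :
    geomSeries Q i j = ∑ m ∈ Finset.range n, (-1 : ℂ) ^ m * pow Q m i j := by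
  have hz : ∀ m : ℕ, i - j < m → (-1 : ℂ) ^ m * pow Q m i j = 0 := fun m hm => by
    rw [(hQ.pow m).apply_eq_zero (by linarith), mul_zero]
  rcases le_total n ((i - j).toNat + 1) with h | h
  · exact (Finset.sum_subset (Finset.range_subset_range.2 h) fun m _ hm =>
      hz m (by rw [Finset.mem_range] at hm; omega)).symm
  · exact Finset.sum_subset (Finset.range_subset_range.2 h) fun m _ hm =>
      hz m (by rw [Finset.mem_range] at hm; omega)

lemma maxDeg_geomSeries (hQ : MaxDeg (-1) Q) : MaxDeg 0 (geomSeries Q) := by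
  intro i j h
  by_contra hlt
  exact h (by simp [geomSeries_apply_eq_sum hQ (i := i) (j := j) (n := 0) (by omega)])

lemma geomSeries_apply_self (hQ : MaxDeg (-1) Q) (i : ℤ) : geomSeries Q i i = 1 := by
  simp [geomSeries_apply_eq_sum hQ (i := i) (j := i) (n := 1) (by omega), pow, one]

lemma geomSeries_add_sum_pow_succ (hQ : MaxDeg (-1) Q) {i j : ℤ} {n : ℕ} (hn : i - j < n) :
    geomSeries Q i j + ∑ m ∈ Finset.range n, (-1 : ℂ) ^ m * pow Q (m + 1) i j = one i j := by
  rw [geomSeries_apply_eq_sum hQ (n := n + 1) (by omega), Finset.sum_range_succ',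
    add_right_comm, ← Finset.sum_add_distrib]
  simp [pow_succ, pow]

lemma mul_geomSeries_apply {b : ℤ} {B : Mat} (hQ : MaxDeg (-1) Q) (hB : MaxDeg b B)
    {i j : ℤ} {n : ℕ} (hn : i - j + b < n) :
    mul B (geomSeries Q) i j = ∑ m ∈ Finset.range n, (-1 : ℂ) ^ m * mul B (pow Q m) i j := by
  have hpow : ∀ m, MaxDeg 0 (pow Q m) := fun m => (hQ.pow m).mono (by omega)
  simp_rw [mul_apply_eq_sum hB (maxDeg_geomSeries hQ), mul_apply_eq_sum hB (hpow _),
    Finset.mul_sum]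
  rw [Finset.sum_comm]
  refine Finset.sum_congr rfl fun k hk => ?_
  rw [Finset.mem_Icc] at hk
  rw [geomSeries_apply_eq_sum hQ (n := n) (by omega), Finset.mul_sum]
  exact Finset.sum_congr rfl fun m _ => by ring

lemma geomSeries_mul_apply {b : ℤ} {B : Mat} (hQ : MaxDeg (-1) Q) (hB : MaxDeg b B)
    {i j : ℤ} {n : ℕ} (hn : i - j + b < n) :
    mul (geomSeries Q) B i j = ∑ m ∈ Finset.range n, (-1 : ℂ) ^ m * mul (pow Q m) B i j := by
  have hpow : ∀ m, MaxDeg 0 (pow Q m) := fun m => (hQ.pow m).mono (by omega)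
  simp_rw [mul_apply_eq_sum (maxDeg_geomSeries hQ) hB, mul_apply_eq_sum (hpow _) hB,
    Finset.mul_sum]
  rw [Finset.sum_comm]
  refine Finset.sum_congr rfl fun k hk => ?_
  rw [Finset.mem_Icc] at hk
  rw [geomSeries_apply_eq_sum hQ (n := n) (by omega), Finset.sum_mul]
  exact Finset.sum_congr rfl fun m _ => by ring

lemma one_add_mul_geomSeries (hQ : MaxDeg (-1) Q) : mul (one + Q) (geomSeries Q) = one := by
  rw [add_mul_of_maxDeg maxDeg_one (hQ.mono (by omega)) (maxDeg_geomSeries hQ), one_mul_eq_self]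
  funext i j
  rw [Pi.add_apply, Pi.add_apply, mul_geomSeries_apply hQ hQ (n := (i - j).toNat + 1) (by omega)]
  exact geomSeries_add_sum_pow_succ hQ (by omega)

lemma geomSeries_mul_one_add (hQ : MaxDeg (-1) Q) : mul (geomSeries Q) (one + Q) = one := by
  rw [mul_add_of_maxDeg (maxDeg_geomSeries hQ) maxDeg_one (hQ.mono (by omega)), mul_one_eq_self]
  funext i j
  rw [Pi.add_apply, Pi.add_apply, geomSeries_mul_apply hQ hQ (n := (i - j).toNat + 1) (by omega)]
  simp_rw [← pow_succ_eq_mul_pow hQ]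
  exact geomSeries_add_sum_pow_succ hQ (by omega)

end GeomSeries

section GeomInv

variable {r : ℤ} {R : Mat}

lemma hasDegree_topPart : HasDegree r (topPart r R) := by
  intro i j h
  by_contra hj
  simp [topPart, hj] at h

lemma hasDegree_topInv : HasDegree (-r) (topInv r R) := by
  intro i j h
  by_contra hj
  simp [topInv, show j ≠ i - r by omega] at h

lemma MaxDeg.sub_topPart (hR : MaxDeg r R) : MaxDeg (r - 1) (R - topPart r R) := by
  intro i j h
  by_contra hlt
  apply h
  by_cases hj : j = i + r
  · simp [topPart, hj]
  · simp [topPart, hj, hR.apply_eq_zero (show r < j - i by omega)]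

lemma topPart_mul_topInv (htop : ∀ i, R i (i + r) ≠ 0) :
    mul (topPart r R) (topInv r R) = one := by
  funext i j
  rw [mul_apply_of_hasDegree hasDegree_topPart]
  by_cases hij : i = j
  · subst hij
    simp [topPart, topInv, one, htop]
  · simp [topPart, topInv, one, hij, Ne.symm hij]

lemma topInv_mul_topPart (htop : ∀ i, R i (i + r) ≠ 0) :
    mul (topInv r R) (topPart r R) = one := by
  funext i j
  rw [mul_apply_of_hasDegree hasDegree_topInv]
  by_cases hij : i = j
  · subst hij
    have h := htop (i - r)
    rw [sub_add_cancel] at h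
    simp [topPart, topInv, one, ← sub_eq_add_neg, h]
  · simp [topPart, topInv, one, hij, Ne.symm hij]

lemma maxDeg_sub_topPart_mul_topInv (hR : MaxDeg r R) :
    MaxDeg (-1) (mul (R - topPart r R) (topInv r R)) :=
  (hR.sub_topPart.mul hasDegree_topInv.maxDeg).mono (by omega)

lemma one_add_mul_topPart (hR : MaxDeg r R) (htop : ∀ i, R i (i + r) ≠ 0) :
    mul (one + mul (R - topPart r R) (topInv r R)) (topPart r R) = R := by
  have hQ := maxDeg_sub_topPart_mul_topInv hR
  rw [add_mul_of_maxDeg maxDeg_one (hQ.mono (by omega)) hasDegree_topPart.maxDeg,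
    one_mul_eq_self, mul_assoc_of_maxDeg hR.sub_topPart hasDegree_topInv.maxDeg
      hasDegree_topPart.maxDeg, topInv_mul_topPart htop, mul_one_eq_self, add_sub_cancel]

lemma maxDeg_geomInv (hR : MaxDeg r R) : MaxDeg (-r) (geomInv r R) :=
  (hasDegree_topInv.maxDeg.mul (maxDeg_geomSeries (maxDeg_sub_topPart_mul_topInv hR))).mono
    (by omega)

lemma mul_geomInv (hR : MaxDeg r R) (htop : ∀ i, R i (i + r) ≠ 0) :
    mul R (geomInv r R) = one := by
  set Q := mul (R - topPart r R) (topInv r R)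
  have hQ : MaxDeg (-1) Q := maxDeg_sub_topPart_mul_topInv hR
  have h1Q : MaxDeg 0 (one + Q) := maxDeg_one.add (hQ.mono (by omega))
  have hRT : mul R (topInv r R) = one + Q := calc
    mul R (topInv r R) = mul (mul (one + Q) (topPart r R)) (topInv r R) := by
      rw [one_add_mul_topPart hR htop]
    _ = one + Q := by
      rw [mul_assoc_of_maxDeg h1Q hasDegree_topPart.maxDeg hasDegree_topInv.maxDeg,
        topPart_mul_topInv htop, mul_one_eq_self]
  rw [geomInv, ← mul_assoc_of_maxDeg hR hasDegree_topInv.maxDeg (maxDeg_geomSeries hQ), hRT,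
    one_add_mul_geomSeries hQ]

lemma geomInv_mul (hR : MaxDeg r R) (htop : ∀ i, R i (i + r) ≠ 0) :
    mul (geomInv r R) R = one := by
  set Q := mul (R - topPart r R) (topInv r R)
  have hQ : MaxDeg (-1) Q := maxDeg_sub_topPart_mul_topInv hR
  have h1Q : MaxDeg 0 (one + Q) := maxDeg_one.add (hQ.mono (by omega))
  have hG := maxDeg_geomSeries hQ
  have hGR : mul (geomSeries Q) R = topPart r R := calc
    mul (geomSeries Q) R = mul (geomSeries Q) (mul (one + Q) (topPart r R)) := by
      rw [one_add_mul_topPart hR htop]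
    _ = topPart r R := by
      rw [← mul_assoc_of_maxDeg hG h1Q hasDegree_topPart.maxDeg, geomSeries_mul_one_add hQ,
        one_mul_eq_self]
  rw [geomInv, mul_assoc_of_maxDeg hasDegree_topInv.maxDeg hG hR, hGR, topInv_mul_topPart htop]

lemma geomInv_apply_sub (hR : MaxDeg r R) (i : ℤ) :
    geomInv r R i (i - r) = (R (i - r) i)⁻¹ := by
  rw [geomInv, mul_apply_of_hasDegree hasDegree_topInv, ← sub_eq_add_neg,
    geomSeries_apply_self (maxDeg_sub_topPart_mul_topInv hR)]
  simp [topInv]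

end GeomInv

section IntPow

variable {R : Mat}

lemma maxDeg_intPow (hR : MaxDeg 1 R) (m : ℤ) : MaxDeg m (intPow R m) := by
  unfold intPow
  split_ifs with hm
  · exact (hR.pow _).mono (by omega)
  · exact ((maxDeg_geomInv hR).pow _).mono (by omega)

lemma intPow_mul_comm (hR : MaxDeg 1 R) (htop : ∀ i, R i (i + 1) ≠ 0) (m : ℤ) :
    mul (intPow R m) R = mul R (intPow R m) := by
  unfold intPow
  split_ifs
  · exact pow_mul_comm hR hR rfl _
  · exact pow_mul_comm (maxDeg_geomInv hR) hR
      ((geomInv_mul hR htop).trans (mul_geomInv hR htop).symm) _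

lemma intPow_apply_top_ne_zero (hR : MaxDeg 1 R) (htop : ∀ i, R i (i + 1) ≠ 0) (m i : ℤ) :
    intPow R m i (i + m) ≠ 0 := by
  unfold intPow
  split_ifs with hm
  · simpa [show (m.toNat : ℤ) = m by omega] using pow_apply_top_ne_zero hR htop m.toNat i
  · have hG : ∀ i, geomInv 1 R i (i + -1) ≠ 0 := fun i => by
      rw [← sub_eq_add_neg, geomInv_apply_sub hR]
      exact inv_ne_zero (by simpa using htop (i - 1))
    have h := pow_apply_top_ne_zero (maxDeg_geomInv hR) hG (-m).toNat i
    rwa [show ((-m).toNat : ℤ) * -1 = m by omega] at h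

end IntPow

section TodaM

variable {φ y : ℤ → ℂ}

lemma maxDeg_todaM : MaxDeg 1 (todaM φ y) := by
  intro i j h
  by_contra hlt
  simp [todaM, show j ≠ i by omega, show j ≠ i + 1 by omega, show i ≠ j + 1 by omega] at h

lemma todaM_apply_add_one (i : ℤ) : todaM φ y i (i + 1) = y i := by
  simp [todaM]

lemma mul_todaM_apply (X : Mat) (i j : ℤ) :
    mul X (todaM φ y) i j = X i (j - 1) * y (j - 1) + X i j * φ j + X i (j + 1) * y j := by
  rw [mul, tsum_eq_sum (s := {j - 1, j, j + 1}) fun k hk => ?_]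
  · rw [Finset.sum_insert (by simp; omega), Finset.sum_insert (by simp), Finset.sum_singleton]
    simp [todaM, show j ≠ j - 1 by omega, show j ≠ j + 1 + 1 by omega]
    ring
  · simp only [Finset.mem_insert, Finset.mem_singleton, not_or] at hk
    simp [todaM, Ne.symm hk.2.1, show j ≠ k + 1 by omega, show k ≠ j + 1 from hk.2.2]

lemma todaM_mul_apply (X : Mat) (i j : ℤ) :
    mul (todaM φ y) X i j = y (i - 1) * X (i - 1) j + φ i * X i j + y i * X (i + 1) j := by
  rw [mul, tsum_eq_sum (s := {i - 1, i, i + 1}) fun k hk => ?_]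
  · rw [Finset.sum_insert (by simp; omega), Finset.sum_insert (by simp), Finset.sum_singleton]
    simp [todaM, show i - 1 ≠ i + 1 by omega]
    ring
  · simp only [Finset.mem_insert, Finset.mem_singleton, not_or] at hk
    simp [todaM, hk.2.1, hk.2.2, show i ≠ k + 1 by omega]

end TodaM

section Commutant

variable {φ y : ℤ → ℂ} {d : ℤ} {X P : Mat}

lemma comm_todaM_sub (X P : Mat) :
    comm (X - P) (todaM φ y) = comm X (todaM φ y) - comm P (todaM φ y) := by
  funext i j
  simp only [comm, Pi.sub_apply, mul_todaM_apply, todaM_mul_apply]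
  ring

lemma comm_todaM_smul (c : ℂ) (X : Mat) :
    comm (c • X) (todaM φ y) = c • comm X (todaM φ y) := by
  funext i j
  simp only [comm, Pi.sub_apply, Pi.smul_apply, smul_eq_mul, mul_todaM_apply, todaM_mul_apply]
  ring

lemma comm_todaM_top (hX : MaxDeg d X) (hc : comm X (todaM φ y) = 0) (i : ℤ) :
    X i (i + d) * y (i + d) = y i * X (i + 1) (i + 1 + d) := by
  have h := congrFun (congrFun hc i) (i + d + 1)
  rw [comm, Pi.sub_apply, Pi.sub_apply, Pi.zero_apply, Pi.zero_apply, mul_todaM_apply,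
    todaM_mul_apply, add_sub_cancel_right,
    hX.apply_eq_zero (i := i) (j := i + d + 1) (by omega),
    hX.apply_eq_zero (i := i) (j := i + d + 1 + 1) (by omega),
    hX.apply_eq_zero (i := i - 1) (j := i + d + 1) (by omega)] at h
  rw [add_right_comm i 1 d]
  linear_combination h

lemma eq_zero_of_mul_eq_mul_succ {g u v : ℤ → ℂ} (hu : ∀ i, u i ≠ 0)
    (hv : ∀ i, v i ≠ 0) (hrec : ∀ i, g i * u i = v i * g (i + 1)) (h0 : g 0 = 0) (i : ℤ) :
    g i = 0 := by
  induction i using Int.induction_on with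
  | zero => exact h0
  | succ n ih =>
    have h := hrec n
    rw [ih, zero_mul] at h
    exact (mul_eq_zero.mp h.symm).resolve_left (hv n)
  | pred n ih =>
    have h := hrec (-n - 1)
    rw [sub_add_cancel, ih, mul_zero] at h
    exact (mul_eq_zero.mp h).resolve_right (hu _)

lemma apply_top_eq_div_mul_of_comm_todaM (hy0 : ∀ i, y i ≠ 0) (hX : MaxDeg d X)
    (hcX : comm X (todaM φ y) = 0) (hP : MaxDeg d P) (hcP : comm P (todaM φ y) = 0)
    (hP0 : P 0 d ≠ 0) (i : ℤ) : X i (i + d) = X 0 d / P 0 d * P i (i + d) := by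
  set c := X 0 d / P 0 d
  refine sub_eq_zero.mp <| eq_zero_of_mul_eq_mul_succ (g := fun i => X i (i + d) - c * P i (i + d))
    (fun i => hy0 (i + d)) hy0 (fun i => ?_) (by simp [c, hP0]) i
  linear_combination comm_todaM_top hX hcX i - c * comm_todaM_top hP hcP i

end Commutant

section Expansion

variable {φ y : ℤ → ℂ} (P : ℤ → Mat) (k : ℤ) (X : Mat)

noncomputable def leadCoeff (d : ℤ) (Y : Mat) : ℂ := Y 0 d / P d 0 d

noncomputable def laurentRemainder : ℕ → Mat
  | 0 => X
  | n + 1 => laurentRemainder n - leadCoeff P (k - n) (laurentRemainder n) • P (k - n)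

noncomputable def laurentCoeff (n : ℕ) : ℂ := leadCoeff P (k - n) (laurentRemainder P k X n)

lemma apply_eq_sum_add_laurentRemainder (n : ℕ) (i j : ℤ) :
    X i j = ∑ s ∈ Finset.range n, laurentCoeff P k X s * P (k - s) i j
      + laurentRemainder P k X n i j := by
  induction n with
  | zero => simp [laurentRemainder]
  | succ n ih =>
    rw [Finset.sum_range_succ, ih]
    simp only [laurentRemainder, laurentCoeff, Pi.sub_apply, Pi.smul_apply, smul_eq_mul]
    ring

variable {P k X}

lemma maxDeg_sub_leadCoeff_smul {d : ℤ} {Y : Mat} (hy0 : ∀ i, y i ≠ 0) (hP : MaxDeg d (P d))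
    (hcP : comm (P d) (todaM φ y) = 0) (hP0 : P d 0 d ≠ 0) (hY : MaxDeg d Y)
    (hcY : comm Y (todaM φ y) = 0) : MaxDeg (d - 1) (Y - leadCoeff P d Y • P d) := by
  intro i j h
  by_contra hlt
  apply h
  simp only [Pi.sub_apply, Pi.smul_apply, smul_eq_mul, leadCoeff]
  by_cases hj : j = i + d
  · rw [hj, apply_top_eq_div_mul_of_comm_todaM hy0 hY hcY hP hcP hP0 i, sub_self]
  · rw [hY.apply_eq_zero (i := i) (j := j) (by omega),
      hP.apply_eq_zero (i := i) (j := j) (by omega), mul_zero, sub_zero]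

lemma laurentRemainder_spec (hy0 : ∀ i, y i ≠ 0) (hPdeg : ∀ d, MaxDeg d (P d))
    (hPcomm : ∀ d, comm (P d) (todaM φ y) = 0) (hP0 : ∀ d, P d 0 d ≠ 0) (hX : MaxDeg k X)
    (hcX : comm X (todaM φ y) = 0) (n : ℕ) :
    MaxDeg (k - n) (laurentRemainder P k X n) ∧
      comm (laurentRemainder P k X n) (todaM φ y) = 0 := by
  induction n with
  | zero => simpa [laurentRemainder] using ⟨hX, hcX⟩
  | succ n ih =>
    refine ⟨(maxDeg_sub_leadCoeff_smul hy0 (hPdeg _) (hPcomm _) (hP0 _) ih.1 ih.2).mono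
      (by push_cast; omega), ?_⟩
    rw [laurentRemainder, comm_todaM_sub, comm_todaM_smul, ih.2, hPcomm, smul_zero, sub_zero]

def natEquivIntLE (k : ℤ) : ℕ ≃ {m : ℤ // m ≤ k} where
  toFun s := ⟨k - s, by omega⟩
  invFun m := (k - m).toNat
  left_inv s := by simp
  right_inv m := Subtype.ext (by have := m.2; simp; omega)

theorem exists_tsum_eq_of_comm_todaM (hy0 : ∀ i, y i ≠ 0) (hPdeg : ∀ d, MaxDeg d (P d))
    (hPcomm : ∀ d, comm (P d) (todaM φ y) = 0) (hP0 : ∀ d, P d 0 d ≠ 0) (hX : MaxDeg k X)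
    (hcX : comm X (todaM φ y) = 0) :
    ∃ lam : ℤ → ℂ, ∀ i j, X i j = ∑' m : {m : ℤ // m ≤ k}, lam m * P m i j := by
  refine ⟨fun m => laurentCoeff P k X (k - m).toNat, fun i j => ?_⟩
  -- from `n` steps on, both the remainder and the terms `P (k - s)` vanish at `(i, j)`
  set n := (k - (j - i) + 1).toNat
  have hrem : laurentRemainder P k X n i j = 0 :=
    (laurentRemainder_spec hy0 hPdeg hPcomm hP0 hX hcX n).1.apply_eq_zero (by omega)
  rw [← (natEquivIntLE k).tsum_eq, tsum_eq_sum (s := Finset.range n) fun s hs => ?_]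
  · rw [apply_eq_sum_add_laurentRemainder P k X n, hrem, add_zero]
    simp [natEquivIntLE]
  · rw [(hPdeg _).apply_eq_zero (by simp [natEquivIntLE] at hs ⊢; omega), mul_zero]

end Expansion

theorem commutant_is_laurent_series_in_M_general
    (φ y : ℤ → ℂ)
    (hy0 : ∀ i, y i ≠ 0)
    (k : ℤ) (X : Mat) (hXdeg : MaxDeg k X)
    (hcomm : comm X (todaM φ y) = 0) :
    ∃ lam : ℤ → ℂ, ∀ i j : ℤ,
      X i j = ∑' m : {m : ℤ // m ≤ k}, lam m * intPow (todaM φ y) m i j := by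
  have htop : ∀ i, todaM φ y i (i + 1) ≠ 0 := fun i => by rw [todaM_apply_add_one]; exact hy0 i
  refine exists_tsum_eq_of_comm_todaM hy0 (maxDeg_intPow maxDeg_todaM) (fun d => ?_)
    (fun d => by simpa using intPow_apply_top_ne_zero maxDeg_todaM htop d 0) hXdeg hcomm
  rw [comm, intPow_mul_comm maxDeg_todaM htop, sub_self]

/-- a periodic matrix of maximal degree `k` commuting with the Toda
Lax matrix `M` is an (infinite) linear combination `Σ_{m ≤ k} λ_m M^m`, negative
powers taken via the inverse of `M` in the ring of matrices of finite maximal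
degree. -/
theorem commutant_is_laurent_series_in_M
    (N : ℕ) (hN : 0 < N) (φ y : ℤ → ℂ)
    (hφ : ∀ i, φ (i + N) = φ i) (hy : ∀ i, y (i + N) = y i)
    (hy0 : ∀ i, y i ≠ 0)
    (k : ℤ) (X : Mat) (hXper : Periodic N X) (hXdeg : MaxDeg k X)
    (hcomm : comm X (todaM φ y) = 0) :
    ∃ lam : ℤ → ℂ, ∀ i j : ℤ,
      X i j = ∑' m : {m : ℤ // m ≤ k}, lam m * intPow (todaM φ y) m i j :=
  commutant_is_laurent_series_in_M_general φ y hy0 k X hXdeg hcomm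

end Toda
end

section
/- Let T(x) be a monic polynomial of degree 2k over ℂ with nonvanishing discriminant, and W'(x) a polynomial of degree n ≥ k. If the Laurent expansion at x = ∞ of W'(x)/√(T(x)) has vanishing coefficients of x^{−1}, x^{−2}, …, x^{−k} (equivalently, Res_{x=∞}(x^{j−1} W'(x)/√T(x)) = 0 for j = 1, …, k), then W'(x)² = T(x) G(x)² − f(x) for some polynomials G of degree n−k and f of degree at most n−1. -/
/-!
In `ℂ((x⁻¹))` the square root `s` of `T` has order `-k` in `x⁻¹`, so `r = W'/s` has order
`-(n - k)`. Take `G` to be the polynomial part of `r`: it has degree `n - k`, and the residue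
conditions say exactly that `r - G = O(x^{-(k+1)})`. Then `T G² - W'² = s (G - r) · (s G + W')`
is a product of a series in `O(x^{-1})` and one in `O(x^n)`, so `f = T G² - W'²` has degree at
most `n - 1`.
-/

namespace Toda

open Polynomial HahnSeries

lemma orderTop_eq_of_forall_lt {Γ R : Type*} [LinearOrder Γ] [Zero R] {x : HahnSeries Γ R}
    {a : Γ} (ha : x.coeff a ≠ 0) (hlt : ∀ b < a, x.coeff b = 0) : x.orderTop = a :=
  le_antisymm (orderTop_le_of_coeff_ne_zero ha)
    (le_orderTop_iff_forall.2 fun b hb => hlt b (WithTop.coe_lt_coe.1 hb))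

lemma le_orderTop_mul_of_le {Γ R : Type*} [AddCommMonoid Γ] [LinearOrder Γ]
    [IsOrderedCancelAddMonoid Γ] [NonUnitalNonAssocSemiring R] {x y : HahnSeries Γ R} {a b : Γ}
    (ha : (a : WithTop Γ) ≤ x.orderTop) (hb : (b : WithTop Γ) ≤ y.orderTop) :
    ((a + b : Γ) : WithTop Γ) ≤ (x * y).orderTop :=
  (WithTop.coe_add a b ▸ add_le_add ha hb).trans orderTop_add_le_mul

lemma orderTop_div_eq {K : Type*} [Field K] {x y : LaurentSeries K} {a b : ℤ}
    (hx : x.orderTop = a) (hy : y.orderTop = b) : (x / y).orderTop = ((a - b : ℤ) : WithTop ℤ) := by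
  have h := congrArg orderTop (div_mul_cancel₀ x (orderTop_ne_top.1 (hy ▸ WithTop.coe_ne_top)))
  rw [orderTop_mul, hx, hy, WithTop.add_eq_coe] at h
  obtain ⟨c, d, hc, hd, hcd⟩ := h
  rw [WithTop.coe_eq_coe] at hd
  rw [← hc, WithTop.coe_eq_coe]
  omega

lemma coeff_atInf (p : ℂ[X]) (j : ℤ) :
    (atInf p).coeff j = if j ≤ 0 then p.coeff (-j).toNat else 0 := by
  induction p using Polynomial.induction_on' with
  | add p q hp hq =>
    rw [atInf, eval₂_add, ← atInf, ← atInf, HahnSeries.coeff_add, hp, hq, Polynomial.coeff_add]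
    split <;> simp
  | monomial m a =>
    rw [atInf, eval₂_monomial, single_pow, C_apply, single_mul_single, coeff_single,
      coeff_monomial, nsmul_eq_mul, zero_add]
    split_ifs <;> first | omega | simp

lemma le_orderTop_atInf_iff {p : ℂ[X]} {d : ℕ} :
    ((-d : ℤ) : WithTop ℤ) ≤ (atInf p).orderTop ↔ p.natDegree ≤ d := by
  rw [le_orderTop_iff_forall, natDegree_le_iff_coeff_eq_zero]
  refine ⟨fun h m hm => ?_, fun h j hj => ?_⟩
  · have := h (-m) (WithTop.coe_lt_coe.2 (by omega))
    rwa [coeff_atInf, if_pos (by omega), neg_neg, Int.toNat_natCast] at this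
  · have hj : j < -d := WithTop.coe_lt_coe.1 hj
    rw [coeff_atInf, if_pos (by omega)]
    exact h _ (by omega)

lemma orderTop_atInf {p : ℂ[X]} (hp : p ≠ 0) :
    (atInf p).orderTop = ((-p.natDegree : ℤ) : WithTop ℤ) := by
  refine le_antisymm (orderTop_le_of_coeff_ne_zero ?_) (le_orderTop_atInf_iff.2 le_rfl)
  rw [coeff_atInf, if_pos (by omega), neg_neg, Int.toNat_natCast]
  exact leadingCoeff_ne_zero.2 hp

/-- The terms of index `≤ 0`, which `atInf` identifies with a polynomial in `x`. -/
noncomputable def polyPart {R : Type*} [Semiring R] (r : LaurentSeries R) : R[X] :=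
  ∑ m ∈ Finset.range ((-r.order).toNat + 1), monomial m (r.coeff (-m))

lemma coeff_polyPart {R : Type*} [Semiring R] (r : LaurentSeries R) (m : ℕ) :
    (polyPart r).coeff m = r.coeff (-m) := by
  rw [polyPart, finsetSum_coeff, Finset.sum_eq_single m]
  · exact coeff_monomial_same m _
  · exact fun b _ hb => coeff_monomial_of_ne _ hb.symm
  · intro hm
    rw [Finset.mem_range, not_lt] at hm
    rw [coeff_monomial_same, coeff_eq_zero_of_lt_order (by omega)]

lemma natDegree_polyPart {R : Type*} [Semiring R] {r : LaurentSeries R} {d : ℕ}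
    (hr : r.orderTop = ((-d : ℤ) : WithTop ℤ)) : (polyPart r).natDegree = d := by
  refine natDegree_eq_of_le_of_coeff_ne_zero ?_ ((coeff_polyPart r d).symm ▸ coeff_orderTop_ne hr)
  refine natDegree_le_iff_coeff_eq_zero.2 fun m hm => ?_
  rw [coeff_polyPart]
  exact coeff_eq_zero_of_lt_orderTop (hr ▸ WithTop.coe_lt_coe.2 (by omega))

lemma coeff_atInf_polyPart (r : LaurentSeries ℂ) (j : ℤ) :
    (atInf (polyPart r)).coeff j = if j ≤ 0 then r.coeff j else 0 := by
  rw [coeff_atInf, coeff_polyPart]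
  split_ifs
  · congr; omega
  · rfl

lemma le_orderTop_sub_atInf_polyPart {r : LaurentSeries ℂ} {k : ℕ}
    (hr : ∀ j : ℕ, 1 ≤ j → j ≤ k → r.coeff j = 0) :
    ((k + 1 : ℤ) : WithTop ℤ) ≤ (r - atInf (polyPart r)).orderTop := by
  refine le_orderTop_iff_forall.2 fun j hj => ?_
  have hj : j < k + 1 := WithTop.coe_lt_coe.1 hj
  rw [HahnSeries.coeff_sub, coeff_atInf_polyPart]
  split_ifs with hj0
  · exact sub_self _
  · lift j to ℕ using by omega
    rw [sub_zero]
    exact hr j (by omega) (by omega)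

lemma natDegree_mul_sq_sub_sq_le {T W G : ℂ[X]} {s : LaurentSeries ℂ} {k n : ℕ}
    (hsT : s * s = atInf T) (hs : s.orderTop = ((-k : ℤ) : WithTop ℤ)) (hW : W.natDegree ≤ n)
    (hG : G.natDegree + k ≤ n)
    (hclose : ((k + 1 : ℤ) : WithTop ℤ) ≤ (atInf W / s - atInf G).orderTop) :
    (T * G ^ 2 - W ^ 2).natDegree ≤ n - 1 := by
  have hs0 : s ≠ 0 := orderTop_ne_top.1 (hs ▸ WithTop.coe_ne_top)
  set r := atInf W / s
  have hw : atInf W = r * s := (div_mul_cancel₀ _ hs0).symm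
  have hfactor : atInf (T * G ^ 2 - W ^ 2) = s * (r - atInf G) * -(s * atInf G + atInf W) := by
    rw [atInf, eval₂_sub, eval₂_mul, eval₂_pow, eval₂_pow, ← atInf, ← atInf, ← atInf, ← hsT]
    linear_combination (-(atInf W + s * atInf G)) * hw
  have hsmall : ((1 : ℤ) : WithTop ℤ) ≤ (s * (r - atInf G)).orderTop := by
    simpa using le_orderTop_mul_of_le hs.ge hclose
  have hsG : ((-n : ℤ) : WithTop ℤ) ≤ (s * atInf G).orderTop := by
    have hg : ((-G.natDegree : ℤ) : WithTop ℤ) ≤ (atInf G).orderTop :=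
      le_orderTop_atInf_iff.2 le_rfl
    exact (WithTop.coe_le_coe.2 (by omega)).trans (le_orderTop_mul_of_le hs.ge hg)
  have hlarge : ((-n : ℤ) : WithTop ℤ) ≤ (-(s * atInf G + atInf W)).orderTop := by
    rw [orderTop_neg]
    exact (le_min hsG (le_orderTop_atInf_iff.2 hW)).trans min_orderTop_le_orderTop_add
  rw [← le_orderTop_atInf_iff, hfactor]
  exact (WithTop.coe_le_coe.2 (by omega)).trans (le_orderTop_mul_of_le hsmall hlarge)

theorem residue_conditions_give_matrix_model_curve_general
    (k n : ℕ) (hk : 0 < k) (hkn : k ≤ n)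
    (T : Polynomial ℂ)
    (s : LaurentSeries ℂ) (hs2 : s * s = atInf T)
    (hslead : s.coeff (-(k : ℤ)) = 1)
    (hsord : ∀ m : ℤ, m < -(k : ℤ) → s.coeff m = 0)
    (W' : Polynomial ℂ) (hW' : W'.natDegree = n)
    (hres : ∀ j : ℕ, 1 ≤ j → j ≤ k → (atInf W' / s).coeff (j : ℤ) = 0) :
    ∃ G f : Polynomial ℂ, G.natDegree = n - k ∧ f.natDegree ≤ n - 1 ∧
      W' ^ 2 = T * G ^ 2 - f := by
  have hs : s.orderTop = ((-k : ℤ) : WithTop ℤ) :=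
    orderTop_eq_of_forall_lt (by rw [hslead]; exact one_ne_zero) hsord
  have hW0 : W' ≠ 0 := by rintro rfl; simp at hW'; omega
  have hr : (atInf W' / s).orderTop = ((-(n - k : ℕ) : ℤ) : WithTop ℤ) := by
    rw [orderTop_div_eq (orderTop_atInf hW0) hs, hW']
    congr 1
    omega
  have hG := natDegree_polyPart hr
  refine ⟨polyPart (atInf W' / s), T * polyPart (atInf W' / s) ^ 2 - W' ^ 2, hG, ?_, by ring⟩
  exact natDegree_mul_sq_sub_sq_le hs2 hs hW'.le (by omega) (le_orderTop_sub_atInf_polyPart hres)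

/-- if the first `k` negative Laurent coefficients of `W'/√T` at
infinity vanish, then `W'² = T G² − f` with `deg G = n − k`, `deg f ≤ n − 1`. -/
theorem residue_conditions_give_matrix_model_curve
    (k n : ℕ) (hk : 0 < k) (hkn : k ≤ n)
    (T : Polynomial ℂ) (hTmonic : T.Monic) (hTdeg : T.natDegree = 2 * k)
    (hTsf : Squarefree T)
    (s : LaurentSeries ℂ) (hs2 : s * s = atInf T)
    (hslead : s.coeff (-(k : ℤ)) = 1)
    (hsord : ∀ m : ℤ, m < -(k : ℤ) → s.coeff m = 0)
    (W' : Polynomial ℂ) (hW' : W'.natDegree = n)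
    (hres : ∀ j : ℕ, 1 ≤ j → j ≤ k → (atInf W' / s).coeff (j : ℤ) = 0) :
    ∃ G f : Polynomial ℂ, G.natDegree = n - k ∧ f.natDegree ≤ n - 1 ∧
      W' ^ 2 = T * G ^ 2 - f :=
  residue_conditions_give_matrix_model_curve_general k n hk hkn T s hs2 hslead hsord W' hW' hres

end Toda
end
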